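/- Let p be a prime and let Ψ : ℤ_p[[X]] → ℤ_p[[X]] be a function such that for every g ∈ ℤ_p[[X]] there exist x_1, ..., x_{p-1} ∈ ℤ_p[[X]] with g = Ψ(g)((1+X)^p - 1)·1 + Σ_{i=1}^{p-1} (1+X)^i · x_i((1+X)^p - 1) (i.e. Ψ(g) is the 0-th component of g in the basis {(1+X)^i} over the image of substitution by (1+X)^p - 1). Then for every positive integer a, every integer n ≥ 0, and every f ∈ ℤ_p[[X]], the a-fold iterate Ψ^a(X^n · f) belongs to the ideal of ℤ_p[[X]] generated by the elements X^j · p^[(n - p^(a-1) - j·p^a)/(p^(a-1)(p-1))] for 0 ≤ j ≤ [n/p^a]. -/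

import Mathlib

/-!
Write `φ` for substitution of `(1 + X) ^ p - 1`. Modulo `p`, `φ` becomes `f(X) ↦ f(X ^ p)`, and
looking at the coefficient of `X ^ (p k + d)` shows that the `(1 + X) ^ i`, `i < p`, are
independent over its image; since `ℤ_p⟦X⟧` is a domain with `⋂ pᵐ ℤ_p⟦X⟧ = 0`, they stay
independent over `φ(ℤ_p⟦X⟧)`. So the decomposition defining `Ψ` is unique, `Ψ` is additive and
`Ψ (φ h * g) = h * Ψ g`.

As `X ^ p = φ(X) - p X E`, we get `Ψ (X ^ (m + p) f) = X Ψ (X ^ m f) - p Ψ (X ^ (m + 1) E f)`,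
and strong induction on `n` gives the estimate for `a = 1`. For `a + 1`, expand `Ψ (X ^ n f)`
along the generators `X ^ j p ^ e₁(n, j)` of the case `a = 1` and apply the case `a` to each
`Ψ^[a] (X ^ j r)`; the exponents combine by `e_{a+1}(n, j') ≤ e₁(n, j) + e_a(j, j')`.
-/

open PowerSeries

/-- Substitution of a power series `g` with zero constant term into a power series `f`:
the coefficient of `X^d` in `f(g)` is `∑_{n ≤ d} (coeff n f) · (coeff d g^n)`.
(When the constant term of `g` vanishes, `coeff d (g^n) = 0` for `n > d`, so this is
the usual substitution `f ↦ f(g)`.) -/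
noncomputable def PowerSeries.subst' {R : Type*} [CommRing R] (g f : R⟦X⟧) : R⟦X⟧ :=
  PowerSeries.mk fun d => ∑ n ∈ Finset.range (d + 1), coeff n f * coeff d (g ^ n)

theorem AddMonoidHom.map_mem_of_mem_span {A : Type*} [CommRing A] (T : A →+ A) {S : Set A}
    {K : Ideal A} (hT : ∀ s ∈ S, ∀ r, T (r * s) ∈ K) {x : A} (hx : x ∈ Ideal.span S) :
    T x ∈ K := by
  suffices ∀ r, T (r * x) ∈ K by simpa using this 1
  induction hx using Submodule.span_induction with
  | mem s hs => exact hT s hs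
  | zero => simp
  | add x y _ _ hx hy => exact fun r => by rw [mul_add, map_add]; exact K.add_mem (hx r) (hy r)
  | smul c x _ hx => exact fun r => by rw [smul_eq_mul, ← mul_assoc]; exact hx (r * c)

theorem Ideal.mul_mem_of_mem_span {A : Type*} [CommRing A] {S : Set A} {K : Ideal A} {u : A}
    (h : ∀ s ∈ S, u * s ∈ K) {x : A} (hx : x ∈ Ideal.span S) : u * x ∈ K :=
  (AddMonoidHom.mulLeft u).map_mem_of_mem_span
    (fun s hs r => by simpa [mul_left_comm] using K.mul_mem_left r (h s hs)) hx

open Finset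

namespace PowerSeries

variable {R : Type*} [CommRing R]

theorem subst'_eq_subst {g : R⟦X⟧} (hg : constantCoeff g = 0) (f : R⟦X⟧) :
    subst' g f = subst g f := by
  ext d
  rw [subst', coeff_mk, coeff_subst' (HasSubst.of_constantCoeff_zero' hg),
    finsum_eq_sum_of_support_subset _ (s := range (d + 1))]
  · simp only [smul_eq_mul]
  intro n hn
  contrapose! hn
  have : (X : R⟦X⟧) ^ n ∣ g ^ n := pow_dvd_pow_of_dvd (X_dvd_iff.mpr hg) n
  simp [X_pow_dvd_iff.mp this d (by simpa using hn)]

theorem coeff_one_add_X_pow (n k : ℕ) : coeff k ((1 + X : R⟦X⟧) ^ n) = n.choose k := by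
  rw [← Polynomial.coe_X, ← Polynomial.coe_one, ← Polynomial.coe_add, ← Polynomial.coe_pow,
    Polynomial.coeff_coe, Polynomial.coeff_one_add_X_pow]

theorem coeff_one_add_X_pow_mul_expand {p : ℕ} (hp : p ≠ 0) {i d : ℕ} (hid : i ≤ d) (hdp : d < p)
    (w : R⟦X⟧) (k : ℕ) :
    coeff (p * k + d) ((1 + X) ^ i * expand p hp w) = i.choose d * coeff k w := by
  rw [coeff_mul, sum_eq_single (d, p * k)]
  · rw [coeff_one_add_X_pow, coeff_expand_mul]
  · rintro ⟨a, b⟩ hab hne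
    rw [HasAntidiagonal.mem_antidiagonal] at hab
    rw [coeff_one_add_X_pow, coeff_expand]
    by_cases hai : a ≤ i
    · -- `b = p k + (d - a)` with `0 ≤ d - a < p`, so `p ∣ b` forces `a = d`
      rw [if_neg, mul_zero]
      rintro ⟨c, rfl⟩
      have : c = k := by
        by_contra hck
        rcases Nat.lt_or_gt_of_ne hck with h | h <;> nlinarith
      subst this
      exact hne (Prod.ext (by simp only; omega) rfl)
    · rw [Nat.choose_eq_zero_of_lt (by omega), Nat.cast_zero, zero_mul]
  · simp [add_comm]

theorem eq_zero_of_sum_one_add_X_pow_mul_expand_eq_zero {p : ℕ} (hp : p ≠ 0) {w : ℕ → R⟦X⟧}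
    {m : ℕ} (hm : m ≤ p) (h : ∑ i ∈ range m, (1 + X) ^ i * expand p hp (w i) = 0) :
    ∀ i < m, w i = 0 := by
  induction m with
  | zero => simp
  | succ m ih =>
    have hwm : w m = 0 := by
      ext k
      have := congr(coeff (p * k + m) $h)
      rwa [map_sum, sum_range_succ, sum_eq_zero,
        coeff_one_add_X_pow_mul_expand hp le_rfl (by omega), Nat.choose_self, Nat.cast_one, one_mul, zero_add, map_zero] at this
      intro i hi
      rw [coeff_one_add_X_pow_mul_expand hp (by have := mem_range.mp hi; omega) (by omega),
        Nat.choose_eq_zero_of_lt (by simpa using hi), Nat.cast_zero, zero_mul]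
    rw [sum_range_succ, hwm, map_zero, mul_zero, add_zero] at h
    intro i hi
    rcases Nat.lt_succ_iff_lt_or_eq.mp hi with hi | rfl
    · exact ih (by omega) h i hi
    · exact hwm

theorem exists_one_add_X_pow_sub_one_eq (p : ℕ) [hp : Fact p.Prime] :
    ∃ E : R⟦X⟧, (1 + X) ^ p - 1 = X ^ p + (p : R⟦X⟧) * (X * E) := by
  obtain ⟨E, hE⟩ := exists_add_pow_prime_eq hp.out (X : R⟦X⟧) 1
  exact ⟨E, by rw [add_comm 1 X, hE]; ring⟩

theorem hasSubst_one_add_X_pow_sub_one (p : ℕ) : HasSubst ((1 + X) ^ p - 1 : R⟦X⟧) :=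
  HasSubst.of_constantCoeff_zero' (by simp)

theorem subst_natCast {a : R⟦X⟧} (ha : HasSubst a) (n : ℕ) : subst a (n : R⟦X⟧) = n := by
  rw [← coe_substAlgHom ha, map_natCast]

theorem map_subst_one_add_X_pow_sub_one {S : Type*} [CommRing S] (p : ℕ) [hp : Fact p.Prime]
    [CharP S p] (f : R →+* S) (w : R⟦X⟧) :
    map f (subst ((1 + X) ^ p - 1 : R⟦X⟧) w) = expand p hp.out.ne_zero (map f w) := by
  obtain ⟨E, hE⟩ := exists_one_add_X_pow_sub_one_eq (R := R) p
  have hmap : map f ((1 + X) ^ p - 1) = X ^ p := by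
    rw [hE, map_add, map_mul, map_natCast, ← map_natCast (C (R := S)), CharP.cast_eq_zero,
      map_zero, zero_mul, add_zero, map_pow, map_X]
  rw [expand_apply, ← hmap]
  exact map_subst (hasSubst_one_add_X_pow_sub_one p) w

end PowerSeries

namespace Int

theorem toNat_ediv_le_iff {d : ℤ} (hd : 0 < d) (x : ℤ) (m : ℕ) :
    (x / d).toNat ≤ m ↔ x < (m + 1) * d := by
  rw [toNat_le, ← lt_add_one_iff, Int.ediv_lt_iff_lt_mul hd]

theorem lt_toNat_ediv_add_one_mul {d : ℤ} (hd : 0 < d) (x : ℤ) : x < ((x / d).toNat + 1) * d := by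
  nlinarith [lt_ediv_add_one_mul_self x hd, self_le_toNat (x / d)]

end Int

def sharpExponent (p a n j : ℕ) : ℕ :=
  (((n : ℤ) - (p : ℤ) ^ (a - 1) - j * (p : ℤ) ^ a) / ((p : ℤ) ^ (a - 1) * ((p : ℤ) - 1))).toNat

section sharpExponent

variable {p : ℕ}

theorem sharpExponent_zero_of_lt (hp : 2 ≤ p) {a n : ℕ} (ha : 1 ≤ a) (hn : n < p ^ a) :
    sharpExponent p a n 0 = 0 := by
  have hpa : (p : ℤ) ^ a = p ^ (a - 1) * p := by rw [← pow_succ, Nat.sub_add_cancel ha]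
  have hQ : (1 : ℤ) ≤ p ^ (a - 1) := one_le_pow₀ (by omega)
  have hn' : (n : ℤ) < p ^ a := by exact_mod_cast hn
  rw [← Nat.le_zero, sharpExponent, Int.toNat_ediv_le_iff (by nlinarith)]
  push_cast
  nlinarith

theorem sharpExponent_one_add_self_succ (m j : ℕ) :
    sharpExponent p 1 (m + p) (j + 1) = sharpExponent p 1 m j := by
  simp only [sharpExponent]
  push_cast
  ring_nf

theorem sharpExponent_one_add_self_le (hp : 2 ≤ p) (m j : ℕ) :
    sharpExponent p 1 (m + p) j ≤ sharpExponent p 1 (m + 1) j + 1 := by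
  simp only [sharpExponent, Nat.sub_self, pow_zero, pow_one, one_mul]
  push_cast
  have : (m : ℤ) + p - 1 - j * p = (m + 1 - 1 - j * p) + 1 * (p - 1) := by ring
  rw [this, Int.add_mul_ediv_right _ _ (by omega)]
  omega

theorem sharpExponent_succ_le (hp : 2 ≤ p) {a : ℕ} (ha : 1 ≤ a) (n j j' : ℕ) :
    sharpExponent p (a + 1) n j' ≤ sharpExponent p 1 n j + sharpExponent p a j j' := by
  set Q : ℤ := p ^ (a - 1)
  have hQ : 1 ≤ Q := one_le_pow₀ (by omega)
  have hpa : (p : ℤ) ^ a = Q * p := by rw [← pow_succ, Nat.sub_add_cancel ha]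
  simp only [sharpExponent, Nat.add_sub_cancel, Nat.sub_self, pow_zero, pow_one, one_mul]
  rw [pow_succ, hpa]
  have hp₁ : (0 : ℤ) < p - 1 := by omega
  have h₁ := Int.lt_toNat_ediv_add_one_mul hp₁ ((n : ℤ) - 1 - j * p)
  have h₂ := Int.lt_toNat_ediv_add_one_mul (mul_pos (by omega : (0 : ℤ) < Q) hp₁)
    ((j : ℤ) - Q - j' * (Q * p))
  set e₁ := (((n : ℤ) - 1 - j * p) / (p - 1)).toNat
  set e₂ := (((j : ℤ) - Q - j' * (Q * p)) / (Q * (p - 1))).toNat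
  have h₂' : (p : ℤ) * (j - Q - j' * (Q * p)) ≤ p * ((e₂ + 1) * (Q * (p - 1)) - 1) :=
    mul_le_mul_of_nonneg_left (by omega) (by positivity)
  rw [Int.toNat_ediv_le_iff (mul_pos (by positivity) hp₁)]
  push_cast
  -- `e₁ (p - 1) (Q p - 1) ≥ 0` absorbs the rounding loss of `e₁`
  nlinarith [mul_nonneg (mul_nonneg (Int.natCast_nonneg e₁) hp₁.le)
    (by nlinarith : (0 : ℤ) ≤ Q * p - 1)]

end sharpExponent

namespace PadicInt

variable (p : ℕ) [hp : Fact p.Prime]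

theorem natCast_dvd_of_map_toZMod_eq_zero {w : ℤ_[p]⟦X⟧} (h : map toZMod w = 0) :
    (p : ℤ_[p]⟦X⟧) ∣ w := by
  have hcoeff (k : ℕ) : (p : ℤ_[p]) ∣ coeff k w := by
    rw [← Ideal.mem_span_singleton, ← maximalIdeal_eq_span_p, ← ker_toZMod, RingHom.mem_ker,
      ← coeff_map, h, map_zero]
  choose c hc using hcoeff
  exact ⟨mk c, by ext k; rw [← map_natCast (C (R := ℤ_[p])), coeff_C_mul, coeff_mk, hc]⟩

theorem span_natCast_ne_top : Ideal.span {(p : ℤ_[p]⟦X⟧)} ≠ ⊤ := by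
  rw [Ne, Ideal.span_singleton_eq_top]
  intro hunit
  have := hunit.map constantCoeff
  rw [map_natCast] at this
  exact p_nonunit this

theorem eq_zero_of_sum_one_add_X_pow_mul_subst_eq_zero {w : ℕ → ℤ_[p]⟦X⟧}
    (h : ∑ i ∈ range p, (1 + X) ^ i * subst ((1 + X) ^ p - 1 : ℤ_[p]⟦X⟧) (w i) = 0) :
    ∀ i < p, w i = 0 := by
  have hY := hasSubst_one_add_X_pow_sub_one (R := ℤ_[p]) p
  have natCast_ne_zero : (p : ℤ_[p]⟦X⟧) ≠ 0 := fun h0 =>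
    hp.out.ne_zero (by simpa using congr(constantCoeff $h0))
  have natCast_dvd (v : ℕ → ℤ_[p]⟦X⟧)
      (hv : ∑ i ∈ range p, (1 + X) ^ i * subst ((1 + X) ^ p - 1 : ℤ_[p]⟦X⟧) (v i) = 0) :
      ∀ i < p, (p : ℤ_[p]⟦X⟧) ∣ v i := by
    intro i hi
    apply natCast_dvd_of_map_toZMod_eq_zero
    refine eq_zero_of_sum_one_add_X_pow_mul_expand_eq_zero (w := fun i => map toZMod (v i))
      hp.out.ne_zero le_rfl ?_ i hi
    simpa [map_subst_one_add_X_pow_sub_one] using congr(map (toZMod (p := p)) $hv)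
  have pow_dvd (m : ℕ) : ∀ v : ℕ → ℤ_[p]⟦X⟧,
      ∑ i ∈ range p, (1 + X) ^ i * subst ((1 + X) ^ p - 1 : ℤ_[p]⟦X⟧) (v i) = 0 →
      ∀ i < p, (p : ℤ_[p]⟦X⟧) ^ m ∣ v i := by
    induction m with
    | zero => simp
    | succ m ih =>
      intro v hv
      have (i : ℕ) : ∃ u, i < p → v i = p * u := by
        by_cases hi : i < p
        · exact (natCast_dvd v hv i hi).imp fun _ hu _ => hu
        · exact ⟨0, fun h => absurd h hi⟩
      choose u hu using this
      have hpu : (p : ℤ_[p]⟦X⟧) *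
          ∑ i ∈ range p, (1 + X) ^ i * subst ((1 + X) ^ p - 1 : ℤ_[p]⟦X⟧) (u i) = 0 := by
        rw [mul_sum, ← hv]
        refine sum_congr rfl fun i hi => ?_
        rw [hu i (mem_range.mp hi), subst_mul hY, subst_natCast hY]
        ring
      have hu' := (mul_eq_zero.mp hpu).resolve_left natCast_ne_zero
      intro i hi
      rw [hu i hi, pow_succ']
      exact mul_dvd_mul_left _ (ih u hu' i hi)
  intro i hi
  rw [← Ideal.mem_bot, ← Ideal.iInf_pow_eq_bot_of_isDomain _ (span_natCast_ne_top p),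
    Ideal.mem_iInf]
  intro m
  rw [Ideal.span_singleton_pow, Ideal.mem_span_singleton]
  exact pow_dvd m w h i hi

noncomputable def sharpIdeal (a n : ℕ) : Ideal ℤ_[p]⟦X⟧ :=
  Ideal.span ((fun j : ℕ => X ^ j * (p : ℤ_[p]⟦X⟧) ^ sharpExponent p a n j) '' Set.Iic (n / p ^ a))

variable {p}

theorem mem_sharpIdeal_of_dvd {a n j e : ℕ} (hj : j ≤ n / p ^ a) (he : sharpExponent p a n j ≤ e)
    {g : ℤ_[p]⟦X⟧} (hg : X ^ j * (p : ℤ_[p]⟦X⟧) ^ e ∣ g) : g ∈ sharpIdeal p a n :=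
  Ideal.mem_of_dvd _ ((mul_dvd_mul_left _ (pow_dvd_pow _ he)).trans hg)
    (Ideal.subset_span ⟨j, hj, rfl⟩)

theorem mem_sharpIdeal_of_lt {a n : ℕ} (ha : 1 ≤ a) (hn : n < p ^ a) (g : ℤ_[p]⟦X⟧) :
    g ∈ sharpIdeal p a n :=
  mem_sharpIdeal_of_dvd (Nat.zero_le _) (sharpExponent_zero_of_lt hp.out.two_le ha hn).le
    (by simp)

theorem X_mul_mem_sharpIdeal_add_self {m : ℕ} {x : ℤ_[p]⟦X⟧} (hx : x ∈ sharpIdeal p 1 m) :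
    X * x ∈ sharpIdeal p 1 (m + p) := by
  refine Ideal.mul_mem_of_mem_span ?_ hx
  rintro _ ⟨j, hj, rfl⟩
  refine mem_sharpIdeal_of_dvd (j := j + 1) ?_ (sharpExponent_one_add_self_succ m j).le
    ⟨1, by ring⟩
  rw [pow_one, Nat.add_div_right _ hp.out.pos]
  simpa using hj

theorem natCast_mul_mem_sharpIdeal_add_self {m : ℕ} {x : ℤ_[p]⟦X⟧}
    (hx : x ∈ sharpIdeal p 1 (m + 1)) : p * x ∈ sharpIdeal p 1 (m + p) := by
  refine Ideal.mul_mem_of_mem_span ?_ hx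
  rintro _ ⟨j, hj, rfl⟩
  refine mem_sharpIdeal_of_dvd ?_ (sharpExponent_one_add_self_le hp.out.two_le m j) ⟨1, by ring⟩
  simp only [pow_one, Set.mem_Iic] at hj ⊢
  exact hj.trans (Nat.div_le_div_right (by have := hp.out.pos; omega))

theorem natCast_pow_mul_mem_sharpIdeal_succ {a n j : ℕ} (ha : 1 ≤ a) (hj : j ≤ n / p)
    {x : ℤ_[p]⟦X⟧} (hx : x ∈ sharpIdeal p a j) :
    p ^ sharpExponent p 1 n j * x ∈ sharpIdeal p (a + 1) n := by
  refine Ideal.mul_mem_of_mem_span ?_ hx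
  rintro _ ⟨j', hj', rfl⟩
  refine mem_sharpIdeal_of_dvd ?_ (sharpExponent_succ_le hp.out.two_le ha n j j') ⟨1, by ring⟩
  calc j' ≤ j / p ^ a := hj'
    _ ≤ n / p / p ^ a := Nat.div_le_div_right hj
    _ = n / p ^ (a + 1) := by rw [Nat.div_div_eq_div_mul, ← pow_succ']

def IsPsiOperator (Ψ : ℤ_[p]⟦X⟧ → ℤ_[p]⟦X⟧) : Prop :=
  ∀ g, ∃ x : ℕ → ℤ_[p]⟦X⟧, x 0 = Ψ g ∧
    g = ∑ i ∈ range p, (1 + X) ^ i * subst ((1 + X) ^ p - 1 : ℤ_[p]⟦X⟧) (x i)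

theorem isPsiOperator_of_forall_exists {Ψ : ℤ_[p]⟦X⟧ → ℤ_[p]⟦X⟧}
    (hΨ : ∀ g : ℤ_[p]⟦X⟧, ∃ x : ℕ → ℤ_[p]⟦X⟧,
      g = subst' ((1 + X) ^ p - 1) (Ψ g) * 1 +
        ∑ i ∈ Icc 1 (p - 1), (1 + X) ^ i * subst' ((1 + X) ^ p - 1) (x i)) :
    IsPsiOperator Ψ := by
  intro g
  obtain ⟨x, hx⟩ := hΨ g
  refine ⟨Function.update x 0 (Ψ g), by simp, ?_⟩
  have hrange : range p = insert 0 (Icc 1 (p - 1)) := by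
    ext i
    simp only [mem_range, mem_insert, mem_Icc]
    have := hp.out.pos
    omega
  simp_rw [subst'_eq_subst (by simp : constantCoeff ((1 + X) ^ p - 1 : ℤ_[p]⟦X⟧) = 0)] at hx
  refine hx.trans ?_
  rw [hrange, sum_insert (by simp), Function.update_self, pow_zero, one_mul, mul_one]
  refine congr_arg _ (sum_congr rfl fun i hi => ?_)
  rw [Function.update_of_ne (by have := (mem_Icc.mp hi).1; omega)]

namespace IsPsiOperator

variable {Ψ : ℤ_[p]⟦X⟧ → ℤ_[p]⟦X⟧} (hΨ : IsPsiOperator Ψ)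
include hΨ

theorem apply_eq {g : ℤ_[p]⟦X⟧} {z : ℕ → ℤ_[p]⟦X⟧}
    (hz : g = ∑ i ∈ range p, (1 + X) ^ i * subst ((1 + X) ^ p - 1 : ℤ_[p]⟦X⟧) (z i)) :
    Ψ g = z 0 := by
  obtain ⟨x, hx0, hx⟩ := hΨ g
  have hY := hasSubst_one_add_X_pow_sub_one (R := ℤ_[p]) p
  have := eq_zero_of_sum_one_add_X_pow_mul_subst_eq_zero p (w := x - z)
    (by simp_rw [Pi.sub_apply, subst_sub hY, mul_sub, sum_sub_distrib, ← hx, ← hz, sub_self])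
    0 hp.out.pos
  rw [← hx0]
  exact sub_eq_zero.mp this

theorem map_add (g h : ℤ_[p]⟦X⟧) : Ψ (g + h) = Ψ g + Ψ h := by
  obtain ⟨x, hx0, hx⟩ := hΨ g
  obtain ⟨y, hy0, hy⟩ := hΨ h
  rw [hΨ.apply_eq (z := x + y), Pi.add_apply, hx0, hy0]
  simp_rw [Pi.add_apply, subst_add (hasSubst_one_add_X_pow_sub_one p), mul_add, sum_add_distrib,
    ← hx, ← hy]

theorem map_subst_mul (h g : ℤ_[p]⟦X⟧) :
    Ψ (subst ((1 + X) ^ p - 1 : ℤ_[p]⟦X⟧) h * g) = h * Ψ g := by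
  obtain ⟨x, hx0, hx⟩ := hΨ g
  rw [hΨ.apply_eq (z := fun i => h * x i), hx0]
  simp_rw [subst_mul (hasSubst_one_add_X_pow_sub_one p), mul_left_comm _ (subst _ h), ← mul_sum,
    ← hx]

noncomputable def toAddMonoidHom : ℤ_[p]⟦X⟧ →+ ℤ_[p]⟦X⟧ :=
  AddMonoidHom.mk' Ψ hΨ.map_add

theorem map_sub (g h : ℤ_[p]⟦X⟧) : Ψ (g - h) = Ψ g - Ψ h :=
  hΨ.toAddMonoidHom.map_sub g h

theorem iterate_map_add (a : ℕ) (g h : ℤ_[p]⟦X⟧) : Ψ^[a] (g + h) = Ψ^[a] g + Ψ^[a] h :=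
  _root_.iterate_map_add hΨ.toAddMonoidHom a g h

theorem map_natCast_mul (c : ℕ) (g : ℤ_[p]⟦X⟧) : Ψ (c * g) = c * Ψ g := by
  simpa [subst_natCast (hasSubst_one_add_X_pow_sub_one p)] using hΨ.map_subst_mul c g

theorem iterate_map_natCast_mul (a c : ℕ) (g : ℤ_[p]⟦X⟧) : Ψ^[a] (c * g) = c * Ψ^[a] g :=
  Function.Commute.iterate_left (g := ((c : ℤ_[p]⟦X⟧) * ·)) (hΨ.map_natCast_mul c) a g

theorem apply_X_pow_mul_mem_sharpIdeal (n : ℕ) (f : ℤ_[p]⟦X⟧) :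
    Ψ (X ^ n * f) ∈ sharpIdeal p 1 n := by
  induction n using Nat.strong_induction_on generalizing f with
  | _ n ih =>
  rcases lt_or_ge n p with hn | hn
  · exact mem_sharpIdeal_of_lt le_rfl (by simpa using hn) _
  obtain ⟨m, rfl⟩ := Nat.exists_eq_add_of_le' hn
  obtain ⟨E, hE⟩ := exists_one_add_X_pow_sub_one_eq (R := ℤ_[p]) p
  -- `X ^ p = φ(X) - p X E`
  have hsplit : X ^ (m + p) * f = subst ((1 + X) ^ p - 1 : ℤ_[p]⟦X⟧) (X : ℤ_[p]⟦X⟧) * (X ^ m * f)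
      - (p : ℤ_[p]⟦X⟧) * (X ^ (m + 1) * (E * f)) := by
    rw [subst_X (hasSubst_one_add_X_pow_sub_one p), hE]
    ring
  have := hp.out.two_le
  rw [hsplit, hΨ.map_sub, hΨ.map_subst_mul, hΨ.map_natCast_mul]
  exact sub_mem (X_mul_mem_sharpIdeal_add_self (ih m (by omega) _))
    (natCast_mul_mem_sharpIdeal_add_self (ih (m + 1) (by omega) _))

theorem iterate_apply_X_pow_mul_mem_sharpIdeal {a : ℕ} (ha : 1 ≤ a) (n : ℕ) (f : ℤ_[p]⟦X⟧) :
    Ψ^[a] (X ^ n * f) ∈ sharpIdeal p a n := by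
  induction a, ha using Nat.le_induction generalizing n f with
  | base => exact hΨ.apply_X_pow_mul_mem_sharpIdeal n f
  | succ a ha ih =>
    rw [Function.iterate_succ_apply]
    refine (AddMonoidHom.mk' Ψ^[a] (hΨ.iterate_map_add a)).map_mem_of_mem_span ?_
      (hΨ.apply_X_pow_mul_mem_sharpIdeal n f)
    rintro _ ⟨j, hj, rfl⟩ r
    rw [AddMonoidHom.mk'_apply, show r * (X ^ j * (p : ℤ_[p]⟦X⟧) ^ sharpExponent p 1 n j) =
      ((p ^ sharpExponent p 1 n j : ℕ) : ℤ_[p]⟦X⟧) * (X ^ j * r) by push_cast; ring]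
    rw [hΨ.iterate_map_natCast_mul, Nat.cast_pow]
    exact natCast_pow_mul_mem_sharpIdeal_succ ha (by simpa using hj) (ih j r)

end IsPsiOperator

end PadicInt

/-- **Sharp Estimate I for `ψ^a`** (Theorem 4.1): if `Ψ : ℤ_p[[X]] → ℤ_p[[X]]` sends each
`g` to its `0`-th component in the basis `{(1+X)^i}_{i<p}` over the image of
substitution by `(1+X)^p - 1`, then for `a > 0`, `n ≥ 0` and any `f`, the iterate
`Ψ^a(X^n f)` lies in the ideal generated by `X^j p^[(n - p^(a-1) - j p^a)/(p^(a-1)(p-1))]`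
for `0 ≤ j ≤ [n/p^a]`. -/
theorem sharp_estimate_I_iterated (p : ℕ) [hp : Fact p.Prime]
    (Ψ : PowerSeries ℤ_[p] → PowerSeries ℤ_[p])
    (hΨ : ∀ g : PowerSeries ℤ_[p], ∃ x : ℕ → PowerSeries ℤ_[p],
      g = PowerSeries.subst' ((1 + X) ^ p - 1) (Ψ g) * 1 +
        ∑ i ∈ Finset.Icc 1 (p - 1), (1 + X) ^ i * PowerSeries.subst' ((1 + X) ^ p - 1) (x i))
    (a : ℕ) (ha : 0 < a) (n : ℕ) (f : PowerSeries ℤ_[p]) :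
    Ψ^[a] (X ^ n * f) ∈ Ideal.span ((fun j : ℕ => X ^ j *
        (p : PowerSeries ℤ_[p]) ^ ((((n : ℤ) - (p : ℤ) ^ (a - 1) - j * (p : ℤ) ^ a) /
          ((p : ℤ) ^ (a - 1) * ((p : ℤ) - 1))).toNat)) ''
      (Set.Iic (n / p ^ a))) :=
  (PadicInt.isPsiOperator_of_forall_exists hΨ).iterate_apply_X_pow_mul_mem_sharpIdeal ha n f
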